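/- With the recursive PWM basis {pᵢ} for D = 1/2 as above, every pᵢ with i ≥ 1 satisfies the antiperiodicity −pᵢ(τ) = pᵢ(τ + 1/2) for all τ ∈ (0, 1/2). -/

import Mathlib

/-!
The recursion `p ↦ (∫_{1/2}^τ p) - (mean of that primitive over [0,1])` preserves
antiperiodicity on the half-period. If `f (t + 1/2) = -f t` on `(0, 1/2)`, then the
shift substitution gives `∫_{1/2}^{t+1/2} f = -∫_0^t f`, so the primitive
`F t = ∫_{1/2}^t f` satisfies `F t + F (t + 1/2) = F 0` on `[0, 1/2]`. Integrating this
over `[0, 1/2]` shows that the mean of `F` over `[0, 1]` is `F 0 / 2`, and subtracting it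
from both terms leaves `0`. The induction starts from the tent function `p₁`, which is
antiperiodic by direct computation.
-/

noncomputable def pwm : ℕ → ℝ → ℝ
  | 0 => fun _ => 1
  | 1 => fun τ => if τ < 1/2 then Real.sqrt 3 * (4 * τ - 1) else Real.sqrt 3 * (-4 * τ + 3)
  | (i + 2) => fun τ =>
      (∫ η in (1/2:ℝ)..τ, pwm (i + 1) η)
        - ∫ τ' in (0:ℝ)..1, (∫ η in (1/2:ℝ)..τ', pwm (i + 1) η)

open MeasureTheory intervalIntegral Set

def AntiperiodicOn (f : ℝ → ℝ) (T : ℝ) : Prop :=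
  ∀ τ ∈ Ioo 0 T, f (τ + T) = -f τ

theorem AntiperiodicOn.integral_add_eq_neg_integral {f : ℝ → ℝ} {T t : ℝ}
    (hf : AntiperiodicOn f T) (ht : t ∈ Icc 0 T) :
    ∫ η in T..t + T, f η = -∫ η in 0..t, f η := by
  have hshift : ∫ η in (0:ℝ)..t, f (η + T) = ∫ η in T..t + T, f η := by
    simpa only [zero_add] using integral_comp_add_right f T (a := 0) (b := t)
  rw [← hshift, ← intervalIntegral.integral_neg, integral_of_le ht.1, integral_of_le ht.1,
    integral_Ioc_eq_integral_Ioo, integral_Ioc_eq_integral_Ioo]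
  exact setIntegral_congr_fun measurableSet_Ioo fun η hη =>
    hf η ⟨hη.1, hη.2.trans_le ht.2⟩

theorem AntiperiodicOn.integral_add_integral_shift {f : ℝ → ℝ} {T : ℝ}
    (hf : AntiperiodicOn f T) (hfi : ∀ a b, IntervalIntegrable f volume a b) (a : ℝ)
    {t : ℝ} (ht : t ∈ Icc 0 T) :
    (∫ η in a..t, f η) + ∫ η in a..t + T, f η = (∫ η in a..0, f η) + ∫ η in a..T, f η := by
  have h₀ := integral_interval_sub_left (hfi a t) (hfi a 0)
  have h₁ := integral_interval_sub_left (hfi a (t + T)) (hfi a T)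
  have := hf.integral_add_eq_neg_integral ht
  linarith

theorem integral_eq_mul_of_add_shift_eq {g : ℝ → ℝ} {T c : ℝ} (hT : 0 ≤ T)
    (hg₀ : IntervalIntegrable g volume 0 T) (hg₁ : IntervalIntegrable g volume T (2 * T))
    (hg : ∀ t ∈ Icc 0 T, g t + g (t + T) = c) :
    ∫ t in (0:ℝ)..2 * T, g t = T * c := by
  have hshift : ∫ t in T..2 * T, g t = ∫ t in 0..T, g (t + T) := by
    rw [integral_comp_add_right, zero_add, two_mul]
  have hg₁' : IntervalIntegrable (fun t => g (t + T)) volume 0 T := by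
    simpa [two_mul] using hg₁.comp_add_right T
  rw [← integral_add_adjacent_intervals hg₀ hg₁, hshift, ← integral_add hg₀ hg₁',
    integral_congr fun t ht => hg t (uIcc_of_le hT ▸ ht)]
  simp

noncomputable def centeredPrimitive (f : ℝ → ℝ) (τ : ℝ) : ℝ :=
  (∫ η in (1/2:ℝ)..τ, f η) - ∫ τ' in (0:ℝ)..1, ∫ η in (1/2:ℝ)..τ', f η

theorem pwm_add_two (i : ℕ) : pwm (i + 2) = centeredPrimitive (pwm (i + 1)) := rfl

theorem continuous_centeredPrimitive {f : ℝ → ℝ} (hf : Continuous f) :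
    Continuous (centeredPrimitive f) :=
  (continuous_primitive (fun a b => hf.intervalIntegrable a b) _).sub continuous_const

theorem AntiperiodicOn.centeredPrimitive {f : ℝ → ℝ} (hf : AntiperiodicOn f (1/2))
    (hfi : ∀ a b, IntervalIntegrable f volume a b) :
    AntiperiodicOn (centeredPrimitive f) (1/2) := by
  set F : ℝ → ℝ := fun t => ∫ η in (1/2:ℝ)..t, f η
  have hF : Continuous F := continuous_primitive hfi _
  have hsum : ∀ t ∈ Icc (0:ℝ) (1/2), F t + F (t + 1/2) = F 0 := by
    intro t ht
    simpa [F] using hf.integral_add_integral_shift hfi (1/2) ht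
  have hmean : ∫ t in (0:ℝ)..1, F t = 1/2 * F 0 := by
    simpa using integral_eq_mul_of_add_shift_eq (by norm_num) (hF.intervalIntegrable _ _)
      (hF.intervalIntegrable _ _) hsum
  intro τ hτ
  have := hsum τ (Ioo_subset_Icc_self hτ)
  show F (τ + 1/2) - ∫ t in (0:ℝ)..1, F t = -(F τ - ∫ t in (0:ℝ)..1, F t)
  linarith

theorem pwm_one : pwm 1 = fun τ => Real.sqrt 3 * (1 - 4 * |τ - 1/2|) := by
  funext τ
  show (if τ < 1/2 then _ else _) = _
  split_ifs with hτ
  · rw [abs_of_neg (by linarith)]; ring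
  · rw [abs_of_nonneg (by linarith)]; ring

theorem antiperiodicOn_pwm_one : AntiperiodicOn (pwm 1) (1/2) := by
  intro τ hτ
  simp only [pwm_one]
  rw [add_sub_cancel_right, abs_of_pos hτ.1, abs_of_neg (by linarith [hτ.2])]
  ring

theorem continuous_pwm (i : ℕ) : Continuous (pwm i) := by
  induction i using Nat.twoStepInduction with
  | zero => exact continuous_const
  | one => rw [pwm_one]; fun_prop
  | more n _ ih => exact continuous_centeredPrimitive ih

theorem antiperiodicOn_pwm_succ (i : ℕ) : AntiperiodicOn (pwm (i + 1)) (1/2) := by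
  induction i with
  | zero => exact antiperiodicOn_pwm_one
  | succ k ih =>
    rw [pwm_add_two]
    exact ih.centeredPrimitive fun a b => (continuous_pwm _).intervalIntegrable a b

theorem stmt4 :
    ∀ i : ℕ, 1 ≤ i → ∀ τ ∈ Set.Ioo (0:ℝ) (1/2), -pwm i τ = pwm i (τ + 1/2) := by
  intro i hi τ hτ
  obtain ⟨k, rfl⟩ := Nat.exists_eq_add_of_le' hi
  exact (antiperiodicOn_pwm_succ k τ hτ).symm
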